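/- arXiv:2605.13744 — 5 statements merged into one kernel-verified Lean document; each statement's English description precedes it below -/
import Mathlib

section
/- Let A : ℝ² → ℝ² be an invertible linear map with |det A| = 1, let r̂, r : ℝ² → ℝ be smooth with compact support, and let K be a class of kernel functions k : ℝ² → ℝ that is closed under the action k ↦ π_A[k] and k ↦ π_{A⁻¹}[k] (for instance all smooth compactly supported functions). If k₀ ∈ K minimizes the functional k ↦ ∫_{ℝ²} ( r̂(x) − (k ∗ r)(x) )² dx over K, then π_A[k₀] minimizes the functional k ↦ ∫_{ℝ²} ( π_A[r̂](x) − (k ∗ π_A[r])(x) )² dx over K. In particular, denoting by φ[r̂, r] a minimizer of the first functional, one has π_A[φ[r̂, r]] = φ[π_A[r̂], π_A[r]] in the sense that it is a minimizer of the transformed problem. -/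
open MeasureTheory

lemma aux_mp {E : Type*} [NormedAddCommGroup E] [InnerProductSpace ℝ E]
    [FiniteDimensional ℝ E] [MeasurableSpace E] [BorelSpace E]
    (A : E ≃ₗ[ℝ] E) (hA : |LinearMap.det A.toLinearMap| = 1) :
    MeasurePreserving (⇑A) (volume : Measure E) volume := by
  have hdet : LinearMap.det A.toLinearMap ≠ 0 := by
    intro h; rw [h] at hA; simp at hA
  constructor
  · exact (A.toLinearMap.continuous_of_finiteDimensional).measurable
  · have := Measure.map_linearMap_addHaar_eq_smul_addHaar (volume : Measure E) hdet
    rw [show ⇑A.toLinearMap = ⇑A from rfl] at this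
    rw [this]
    have : |(LinearMap.det A.toLinearMap)⁻¹| = 1 := by
      rw [abs_inv, hA]; norm_num
    rw [this]; simp

lemma aux_int {E : Type*} [NormedAddCommGroup E] [InnerProductSpace ℝ E]
    [FiniteDimensional ℝ E] [MeasurableSpace E] [BorelSpace E]
    (A : E ≃ₗ[ℝ] E) (hA : |LinearMap.det A.toLinearMap| = 1)
    (f : E → ℝ) : ∫ x, f (A x) = ∫ x, f x := by
  have emb : MeasurableEmbedding (⇑A) :=
    (A.toContinuousLinearEquiv.toHomeomorph.measurableEmbedding)
  exact (aux_mp A hA).integral_comp emb f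

/-- **Lemma 3.1: equivariance of the optimal blur-kernel estimation.**
Let `A : ℝ² → ℝ²` be an invertible linear map with `|det A| = 1`, `r̂, r : ℝ² → ℝ`
smooth with compact support, and `K` a class of kernels closed under `k ↦ π_A[k]`
and `k ↦ π_{A⁻¹}[k]` (where `π_A[f](x) = f(A⁻¹x)`).  If `k₀ ∈ K` minimizes
`k ↦ ∫ (r̂(x) − (k ∗ r)(x))² dx` over `K`, then `π_A[k₀]` belongs to `K` and minimizes
`k ↦ ∫ (π_A[r̂](x) − (k ∗ π_A[r])(x))² dx` over `K`; that is,
`π_A[φ[r̂, r]] = φ[π_A[r̂], π_A[r]]` in the sense of minimizers. -/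
theorem stmt_3
    (A : EuclideanSpace ℝ (Fin 2) ≃ₗ[ℝ] EuclideanSpace ℝ (Fin 2))
    (hA : |LinearMap.det A.toLinearMap| = 1)
    (rhat r : EuclideanSpace ℝ (Fin 2) → ℝ)
    (hrhat : ContDiff ℝ (⊤ : ℕ∞) rhat) (hrhatc : HasCompactSupport rhat)
    (hr : ContDiff ℝ (⊤ : ℕ∞) r) (hrc : HasCompactSupport r)
    (K : Set (EuclideanSpace ℝ (Fin 2) → ℝ))
    (hKA : ∀ k ∈ K, (fun x => k (A.symm x)) ∈ K)
    (hKAinv : ∀ k ∈ K, (fun x => k (A x)) ∈ K)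
    (k₀ : EuclideanSpace ℝ (Fin 2) → ℝ) (hk₀ : k₀ ∈ K)
    (hmin : ∀ k ∈ K,
      (∫ x, (rhat x - ∫ t, k₀ t * r (x - t)) ^ 2)
        ≤ ∫ x, (rhat x - ∫ t, k t * r (x - t)) ^ 2) :
    (fun x => k₀ (A.symm x)) ∈ K ∧
      ∀ k ∈ K,
        (∫ x, (rhat (A.symm x) - ∫ t, k₀ (A.symm t) * r (A.symm (x - t))) ^ 2)
          ≤ ∫ x, (rhat (A.symm x) - ∫ t, k t * r (A.symm (x - t))) ^ 2 := by
  refine ⟨hKA k₀ hk₀, ?_⟩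
  -- key: the transformed functional of k equals the original functional of k ∘ A
  have key : ∀ k : EuclideanSpace ℝ (Fin 2) → ℝ,
      (∫ x, (rhat (A.symm x) - ∫ t, k t * r (A.symm (x - t))) ^ 2)
        = ∫ x, (rhat x - ∫ t, k (A t) * r (x - t)) ^ 2 := by
    intro k
    have inner : ∀ x : EuclideanSpace ℝ (Fin 2),
        (∫ t, k t * r (A.symm (x - t)))
          = ∫ t, k (A t) * r (A.symm x - t) := by
      intro x
      rw [← aux_int A hA (fun t => k t * r (A.symm (x - t)))]
      congr 1; ext t
      congr 1
      rw [map_sub]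
      simp
    calc (∫ x, (rhat (A.symm x) - ∫ t, k t * r (A.symm (x - t))) ^ 2)
        = ∫ x, (rhat (A.symm x) - ∫ t, k (A t) * r (A.symm x - t)) ^ 2 := by
          congr 1; ext x; rw [inner x]
      _ = ∫ x, (rhat (A.symm (A x)) - ∫ t, k (A t) * r (A.symm (A x) - t)) ^ 2 := by
          rw [aux_int A hA (fun x => (rhat (A.symm x) - ∫ t, k (A t) * r (A.symm x - t)) ^ 2)]
      _ = ∫ x, (rhat x - ∫ t, k (A t) * r (x - t)) ^ 2 := by
          simp
  intro k hk
  rw [key, key k]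
  have : (fun x => k₀ (A.symm (A x))) = k₀ := by ext x; simp
  rw [show (fun t => k₀ (A.symm (A t))) = k₀ by ext t; simp] at *
  calc (∫ x, (rhat x - ∫ t, k₀ (A.symm (A t)) * r (x - t)) ^ 2)
      = ∫ x, (rhat x - ∫ t, k₀ t * r (x - t)) ^ 2 := by simp
    _ ≤ ∫ x, (rhat x - ∫ t, k (A t) * r (x - t)) ^ 2 := hmin _ (hKAinv k hk)
end

section
/- Let A : ℝ² → ℝ² be an invertible linear map with |det A| = 1, let r̂, r : ℝ² → ℝ be smooth with compact support, and let K be a class of kernel functions closed under the actions k ↦ π_A[k] and k ↦ π_{A⁻¹}[k]. Then the optimal data-fidelity value is invariant under the transformation of the data and the unknown: inf_{k ∈ K} ∫_{ℝ²} ( π_A[r̂](x) − (k ∗ π_A[r])(x) )² dx = inf_{k ∈ K} ∫_{ℝ²} ( r̂(x) − (k ∗ r)(x) )² dx. -/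
open MeasureTheory

/-- **invariance of the optimal data-fidelity value, eq. (3.9).**
Let `A : ℝ² → ℝ²` be an invertible linear map with `|det A| = 1`, `r̂, r : ℝ² → ℝ`
smooth with compact support, and `K` a class of kernels closed under `k ↦ π_A[k]`
and `k ↦ π_{A⁻¹}[k]` (where `π_A[f](x) = f(A⁻¹x)`).  Then
`inf_{k ∈ K} ∫ (π_A[r̂](x) − (k ∗ π_A[r])(x))² dx = inf_{k ∈ K} ∫ (r̂(x) − (k ∗ r)(x))² dx`. -/
theorem stmt_4
    (A : EuclideanSpace ℝ (Fin 2) ≃ₗ[ℝ] EuclideanSpace ℝ (Fin 2))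
    (hA : |LinearMap.det A.toLinearMap| = 1)
    (rhat r : EuclideanSpace ℝ (Fin 2) → ℝ)
    (hrhat : ContDiff ℝ (⊤ : ℕ∞) rhat) (hrhatc : HasCompactSupport rhat)
    (hr : ContDiff ℝ (⊤ : ℕ∞) r) (hrc : HasCompactSupport r)
    (K : Set (EuclideanSpace ℝ (Fin 2) → ℝ))
    (hKA : ∀ k ∈ K, (fun x => k (A.symm x)) ∈ K)
    (hKAinv : ∀ k ∈ K, (fun x => k (A x)) ∈ K) :
    sInf ((fun k : EuclideanSpace ℝ (Fin 2) → ℝ =>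
        ∫ x, (rhat (A.symm x) - ∫ t, k t * r (A.symm (x - t))) ^ 2) '' K)
      = sInf ((fun k : EuclideanSpace ℝ (Fin 2) → ℝ =>
        ∫ x, (rhat x - ∫ t, k t * r (x - t)) ^ 2) '' K) := by
  have hdet : LinearMap.det A.toLinearMap ≠ 0 := by
    intro h
    rw [h] at hA
    simp at hA
  have hAcont : Continuous (⇑A) := A.toLinearMap.continuous_of_finiteDimensional
  have hmp : MeasurePreserving (⇑A)
      (volume : Measure (EuclideanSpace ℝ (Fin 2))) volume := by
    refine ⟨hAcont.measurable, ?_⟩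
    have h := Measure.map_linearMap_addHaar_eq_smul_addHaar
      (volume : Measure (EuclideanSpace ℝ (Fin 2))) hdet
    rw [abs_inv, hA] at h
    simpa using h
  have hemb : MeasurableEmbedding (⇑A) :=
    (A.toContinuousLinearEquiv : EuclideanSpace ℝ (Fin 2) ≃L[ℝ]
      EuclideanSpace ℝ (Fin 2)).toHomeomorph.measurableEmbedding
  have hint : ∀ g : EuclideanSpace ℝ (Fin 2) → ℝ, (∫ x, g (A x)) = ∫ x, g x := fun g =>
    hmp.integral_comp hemb g
  have key : ∀ k : EuclideanSpace ℝ (Fin 2) → ℝ,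
      (∫ x, (rhat (A.symm x) - ∫ t, k t * r (A.symm (x - t))) ^ 2)
      = ∫ x, (rhat x - ∫ t, k (A t) * r (x - t)) ^ 2 := by
    intro k
    rw [← hint (fun x => (rhat (A.symm x) - ∫ t, k t * r (A.symm (x - t))) ^ 2)]
    congr 1
    funext x
    have hinner : (∫ t, k t * r (x - A.symm t)) = ∫ t, k (A t) * r (x - t) := by
      rw [← hint (fun t => k t * r (x - A.symm t))]
      congr 1
      funext t
      simp
    simp [map_sub, hinner]
  have himg : ((fun k : EuclideanSpace ℝ (Fin 2) → ℝ =>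
        ∫ x, (rhat (A.symm x) - ∫ t, k t * r (A.symm (x - t))) ^ 2) '' K)
      = ((fun k : EuclideanSpace ℝ (Fin 2) → ℝ =>
        ∫ x, (rhat x - ∫ t, k t * r (x - t)) ^ 2) '' K) := by
    ext y
    constructor
    · rintro ⟨k, hk, rfl⟩
      exact ⟨fun t => k (A t), hKAinv k hk, (key k).symm⟩
    · rintro ⟨k, hk, rfl⟩
      refine ⟨fun t => k (A.symm t), hKA k hk, ?_⟩
      simpa using key fun t => k (A.symm t)
  rw [himg]
end

section
/- Let N be a positive natural number, let {r̂_n}_{n=1}^N be smooth compactly supported functions ℝ² → ℝ, let R be a real-valued functional on such functions, and for each n let A_n : ℝ² → ℝ² be an invertible linear map with |det A_n| = 1. For ε ≥ 0 define the constraint set Ω_ε of N-tuples (r₁, …, r_N) satisfying (1/N)·|Σ_n R[r_n] − Σ_n R[π_{B_n}[r_n]]| ≤ ε for all admissible choices of transformations B_n, and assume Ω_ε is invariant under the componentwise actions (r_n) ↦ (π_{A_n}[r_n]) and (r_n) ↦ (π_{A_n⁻¹}[r_n]). Define F_n[r] = inf_k ∫_{ℝ²} ( r̂_n(x) − (k ∗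 r)(x) )² dx + R[r], where the infimum is over smooth compactly supported kernels k. Suppose: (i) (r₁*, …, r_N*) ∈ Ω_ε minimizes Σ_n F_n[r_n] over Ω_ε (the restoration Φ[r̂_n] := r_n*); (ii) the μ-quadratic growth condition holds: for every (r₁, …, r_N) ∈ Ω_ε, Σ_n ( F_n[r_n] − F_n[r_n*] ) ≥ μ · Σ_n ‖r_n − r_n*‖₂², with μ > 0; (iii) (s₁, …, s_N) ∈ Ω_ε minimizes Σ_n F̃_n[r_n] over Ω_ε, where F̃_n[r] = inf_k ∫_{ℝ²} ( π_{A_n}[r̂_n](x) − (k ∗ r)(x) )² dx + R[r] (the restoration of the transformed data, Φ[π_{A_n}[r̂_n]] := s_n). Then the averaged equivariance error satisfies (1/N) · Σ_{n=1}^N ‖ s_n − π_{A_n}[r_n*] ‖₂² ≤ 2ε/μ. -/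
open MeasureTheory

abbrev E2 := EuclideanSpace ℝ (Fin 2)

lemma econt (e : E2 ≃ₗ[ℝ] E2) : Continuous e :=
  e.toLinearMap.continuous_of_finiteDimensional

lemma econtdiff (e : E2 ≃ₗ[ℝ] E2) : ContDiff ℝ (⊤ : ℕ∞) ⇑e :=
  (LinearMap.toContinuousLinearMap e.toLinearMap).contDiff

lemma det_symm_abs (e : E2 ≃ₗ[ℝ] E2) (hd : |LinearMap.det e.toLinearMap| = 1) :
    |LinearMap.det e.symm.toLinearMap| = 1 := by
  have h1 : (e.symm.toLinearMap).comp e.toLinearMap = LinearMap.id := by ext x; simp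
  have h2 : LinearMap.det e.symm.toLinearMap * LinearMap.det e.toLinearMap = 1 := by
    rw [← LinearMap.det_comp, h1, LinearMap.det_id]
  calc |LinearMap.det e.symm.toLinearMap|
      = |LinearMap.det e.symm.toLinearMap| * |LinearMap.det e.toLinearMap| := by rw [hd, mul_one]
    _ = |LinearMap.det e.symm.toLinearMap * LinearMap.det e.toLinearMap| := (abs_mul _ _).symm
    _ = 1 := by rw [h2, abs_one]

lemma cov (e : E2 ≃ₗ[ℝ] E2) (hd : |LinearMap.det e.toLinearMap| = 1)
    (g : E2 → ℝ) (hg : Continuous g) : ∫ x, g (e x) = ∫ x, g x := by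
  have hdet0 : LinearMap.det e.toLinearMap ≠ 0 := by
    intro h; rw [h] at hd; simp at hd
  have hmap : Measure.map (⇑e) (volume : Measure E2) = volume := by
    have h := Measure.map_linearMap_addHaar_eq_smul_addHaar (volume : Measure E2) hdet0
    rw [LinearEquiv.coe_coe] at h
    rw [h, abs_inv, hd]; simp
  have h1 : ∫ y, g y ∂(Measure.map (⇑e) (volume : Measure E2))
      = ∫ x, g (e x) :=
    integral_map (econt e).aemeasurable (by rw [hmap]; exact hg.aestronglyMeasurable)
  rw [hmap] at h1
  exact h1.symm

lemma conv_cont (k r : E2 → ℝ) (hk : Continuous k) (hr : Continuous r)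
    (hrc : HasCompactSupport r) :
    Continuous (fun y => ∫ t, k t * r (y - t)) := by
  have h := HasCompactSupport.continuous_convolution_right
    (L := ContinuousLinearMap.mul ℝ ℝ) hrc (hk.locallyIntegrable (μ := volume)) hr
  have heq : (fun y => ∫ t, k t * r (y - t))
      = convolution k r (ContinuousLinearMap.mul ℝ ℝ) volume := by
    funext y; simp [convolution, ContinuousLinearMap.mul_apply']
  rw [heq]; exact h

lemma memK_comp (e : E2 ≃ₗ[ℝ] E2) {k : E2 → ℝ}
    (hk : k ∈ {k : E2 → ℝ | ContDiff ℝ (⊤ : ℕ∞) k ∧ HasCompactSupport k}) :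
    (fun u => k (e u)) ∈ {k : E2 → ℝ | ContDiff ℝ (⊤ : ℕ∞) k ∧ HasCompactSupport k} := by
  refine ⟨hk.1.comp (econtdiff e), ?_⟩
  exact hk.2.comp_homeomorph e.toContinuousLinearEquiv.toHomeomorph

lemma val_transform (e : E2 ≃ₗ[ℝ] E2) (hd : |LinearMap.det e.toLinearMap| = 1)
    (rh r k : E2 → ℝ) (hrh : Continuous rh) (hr : Continuous r)
    (hrc : HasCompactSupport r) (hk : Continuous k) :
    ∫ x, (rh (e.symm x) - ∫ t, k t * r (e.symm (x - t))) ^ 2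
      = ∫ x, (rh x - ∫ t, k (e t) * r (x - t)) ^ 2 := by
  have hds : |LinearMap.det e.symm.toLinearMap| = 1 := det_symm_abs e hd
  have hke : Continuous fun u : E2 => k (e u) := hk.comp (econt e)
  have hC : Continuous (fun y => ∫ t, k (e t) * r (y - t)) := conv_cont _ r hke hr hrc
  have hstep : ∀ x, (∫ t, k t * r (e.symm (x - t))) = ∫ t, k (e t) * r (e.symm x - t) := by
    intro x
    have hg : Continuous fun u : E2 => k (e u) * r (e.symm x - u) :=
      hke.mul (hr.comp (continuous_const.sub continuous_id))
    calc ∫ t, k t * r (e.symm (x - t))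
        = ∫ t, (fun u => k (e u) * r (e.symm x - u)) (e.symm t) := by
          congr 1; funext t; simp [map_sub]
      _ = ∫ u, k (e u) * r (e.symm x - u) := cov e.symm hds _ hg
  calc ∫ x, (rh (e.symm x) - ∫ t, k t * r (e.symm (x - t))) ^ 2
      = ∫ x, (fun y => (rh y - ∫ t, k (e t) * r (y - t)) ^ 2) (e.symm x) := by
        congr 1; funext x; rw [hstep x]
    _ = ∫ x, (rh x - ∫ t, k (e t) * r (x - t)) ^ 2 :=
        cov e.symm hds _ ((hrh.sub hC).pow 2)

lemma sInf_transform (e : E2 ≃ₗ[ℝ] E2) (hd : |LinearMap.det e.toLinearMap| = 1)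
    (rh r : E2 → ℝ) (hrh : Continuous rh) (hr : Continuous r) (hrc : HasCompactSupport r) :
    sInf ((fun k : E2 → ℝ => ∫ x, (rh (e.symm x) - ∫ t, k t * r (e.symm (x - t))) ^ 2) ''
        {k | ContDiff ℝ (⊤ : ℕ∞) k ∧ HasCompactSupport k})
      = sInf ((fun k : E2 → ℝ => ∫ x, (rh x - ∫ t, k t * r (x - t)) ^ 2) ''
        {k | ContDiff ℝ (⊤ : ℕ∞) k ∧ HasCompactSupport k}) := by
  congr 1
  apply Set.Subset.antisymm
  · rintro y ⟨k, hk, rfl⟩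
    exact ⟨fun u => k (e u), memK_comp e hk,
      (val_transform e hd rh r k hrh hr hrc hk.1.continuous).symm⟩
  · rintro y ⟨k, hk, rfl⟩
    refine ⟨fun u => k (e.symm u), memK_comp e.symm hk, ?_⟩
    have hv := val_transform e hd rh r (fun u => k (e.symm u)) hrh hr hrc
      (hk.1.continuous.comp (econt e.symm))
    simpa using hv

/-- **Theorem 3.3, Equivariance Error of Restoration Operator.**
For smooth compactly supported degraded images `r̂_n : ℝ² → ℝ`, a regularization
functional `R`, transformations `A_n ∈ G_n` with `|det A_n| = 1`, and the relaxed
symmetry constraint set `Ω_ε` (invariant under the componentwise actions of `A_n`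
and `A_n⁻¹`), let `F_n[r] = inf_k ∫ (r̂_n − k ∗ r)² + R[r]` (infimum over smooth
compactly supported kernels).  If `(r_n*) ∈ Ω_ε` minimizes `Σ F_n` over `Ω_ε`,
the `μ`-quadratic growth condition holds, and `(s_n) ∈ Ω_ε` minimizes the
analogous objective for the transformed data `π_{A_n}[r̂_n]`, then
`(1/N) Σ ‖s_n − π_{A_n}[r_n*]‖₂² ≤ 2ε/μ`. -/
theorem stmt_6 (N : ℕ) (hN : 0 < N)
    (rhat : Fin N → EuclideanSpace ℝ (Fin 2) → ℝ)
    (hrhat : ∀ n, ContDiff ℝ (⊤ : ℕ∞) (rhat n) ∧ HasCompactSupport (rhat n))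
    (R : (EuclideanSpace ℝ (Fin 2) → ℝ) → ℝ)
    (G : Fin N → Set (EuclideanSpace ℝ (Fin 2) ≃ₗ[ℝ] EuclideanSpace ℝ (Fin 2)))
    (A : Fin N → EuclideanSpace ℝ (Fin 2) ≃ₗ[ℝ] EuclideanSpace ℝ (Fin 2))
    (hAG : ∀ n, A n ∈ G n)
    (hdet : ∀ n, |LinearMap.det (A n).toLinearMap| = 1)
    (ε μ : ℝ) (hε : 0 ≤ ε) (hμ : 0 < μ)
    (Ωε : Set (Fin N → EuclideanSpace ℝ (Fin 2) → ℝ))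
    (hΩdef : Ωε = {r | (∀ n, ContDiff ℝ (⊤ : ℕ∞) (r n) ∧ HasCompactSupport (r n)) ∧
      ∀ B : Fin N → EuclideanSpace ℝ (Fin 2) ≃ₗ[ℝ] EuclideanSpace ℝ (Fin 2),
        (∀ n, B n ∈ G n) →
        (1 / (N : ℝ)) *
          |(∑ n, R (r n)) - ∑ n, R (fun x => r n ((B n).symm x))| ≤ ε})
    (hΩinvA : ∀ r ∈ Ωε, (fun n => fun x => r n ((A n).symm x)) ∈ Ωε)
    (hΩinvAinv : ∀ r ∈ Ωε, (fun n => fun x => r n (A n x)) ∈ Ωε)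
    (F Ft : Fin N → (EuclideanSpace ℝ (Fin 2) → ℝ) → ℝ)
    (hF : ∀ n r, F n r =
      sInf ((fun k : EuclideanSpace ℝ (Fin 2) → ℝ =>
          ∫ x, (rhat n x - ∫ t, k t * r (x - t)) ^ 2) ''
        {k | ContDiff ℝ (⊤ : ℕ∞) k ∧ HasCompactSupport k}) + R r)
    (hFt : ∀ n r, Ft n r =
      sInf ((fun k : EuclideanSpace ℝ (Fin 2) → ℝ =>
          ∫ x, (rhat n ((A n).symm x) - ∫ t, k t * r (x - t)) ^ 2) ''
        {k | ContDiff ℝ (⊤ : ℕ∞) k ∧ HasCompactSupport k}) + R r)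
    (rstar : Fin N → EuclideanSpace ℝ (Fin 2) → ℝ)
    (hrstarΩ : rstar ∈ Ωε)
    (hrstarmin : ∀ r ∈ Ωε, (∑ n, F n (rstar n)) ≤ ∑ n, F n (r n))
    (hQG : ∀ r ∈ Ωε,
      μ * ∑ n, (∫ x, (r n x - rstar n x) ^ 2) ≤ ∑ n, (F n (r n) - F n (rstar n)))
    (s : Fin N → EuclideanSpace ℝ (Fin 2) → ℝ)
    (hsΩ : s ∈ Ωε)
    (hsmin : ∀ r ∈ Ωε, (∑ n, Ft n (s n)) ≤ ∑ n, Ft n (r n)) :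
    (1 / (N : ℝ)) * ∑ n, (∫ x, (s n x - rstar n ((A n).symm x)) ^ 2) ≤ 2 * ε / μ := by
  have hN' : (0 : ℝ) < N := by exact_mod_cast hN
  have hpΩ : (fun n => fun x => s n (A n x)) ∈ Ωε := hΩinvAinv s hsΩ
  have hqΩ : (fun n => fun x => rstar n ((A n).symm x)) ∈ Ωε := hΩinvA rstar hrstarΩ
  have hrstarC := hrstarΩ; have hsC := hsΩ; have hpC := hpΩ
  rw [hΩdef] at hrstarC hsC hpC
  have hrsm : ∀ n, ContDiff ℝ (⊤ : ℕ∞) (rstar n) ∧ HasCompactSupport (rstar n) := hrstarC.1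
  have hssm : ∀ n, ContDiff ℝ (⊤ : ℕ∞) (s n) ∧ HasCompactSupport (s n) := hsC.1
  have hpsm : ∀ n, ContDiff ℝ (⊤ : ℕ∞) (fun x => s n (A n x)) ∧
      HasCompactSupport (fun x => s n (A n x)) := hpC.1
  -- key per-index equality for s
  have hFt_s : ∀ n, Ft n (s n)
      = F n (fun x => s n (A n x)) - R (fun x => s n (A n x)) + R (s n) := by
    intro n
    have h1 := hFt n (s n)
    have h2 := sInf_transform (A n) (hdet n) (rhat n) (fun y => s n (A n y))
      (hrhat n).1.continuous (hpsm n).1.continuous (hpsm n).2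
    simp only [LinearEquiv.apply_symm_apply] at h2
    rw [h2] at h1
    have h3 := hF n (fun x => s n (A n x))
    linarith [h1, h3]
  -- key per-index equality for q
  have hFt_q : ∀ n, Ft n (fun x => rstar n ((A n).symm x))
      = F n (rstar n) - R (rstar n) + R (fun x => rstar n ((A n).symm x)) := by
    intro n
    have h1 := hFt n (fun x => rstar n ((A n).symm x))
    have h2 := sInf_transform (A n) (hdet n) (rhat n) (rstar n)
      (hrhat n).1.continuous (hrsm n).1.continuous (hrsm n).2
    rw [h2] at h1
    linarith [h1, hF n (rstar n)]
  -- sum versions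
  have hsum1 : ∑ n, Ft n (s n)
      = (∑ n, F n (fun x => s n (A n x))) - (∑ n, R (fun x => s n (A n x)))
        + ∑ n, R (s n) := by
    calc ∑ n, Ft n (s n)
        = ∑ n, (F n (fun x => s n (A n x)) - R (fun x => s n (A n x)) + R (s n)) :=
          Finset.sum_congr rfl fun n _ => hFt_s n
      _ = _ := by rw [Finset.sum_add_distrib, Finset.sum_sub_distrib]
  have hsum2 : ∑ n, Ft n (fun x => rstar n ((A n).symm x))
      = (∑ n, F n (rstar n)) - (∑ n, R (rstar n))
        + ∑ n, R (fun x => rstar n ((A n).symm x)) := by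
    calc ∑ n, Ft n (fun x => rstar n ((A n).symm x))
        = ∑ n, (F n (rstar n) - R (rstar n) + R (fun x => rstar n ((A n).symm x))) :=
          Finset.sum_congr rfl fun n _ => hFt_q n
      _ = _ := by rw [Finset.sum_add_distrib, Finset.sum_sub_distrib]
  -- constraint bounds
  have hb1 : |(∑ n, R (rstar n)) - ∑ n, R (fun x => rstar n ((A n).symm x))| ≤ N * ε := by
    have h := hrstarC.2 A hAG
    have h2 := mul_le_mul_of_nonneg_left h (le_of_lt hN')
    have hx : (N : ℝ) * (1 / N) = 1 := by field_simp
    rw [← mul_assoc, hx, one_mul] at h2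
    exact h2
  have hb2 : |(∑ n, R (fun x => s n (A n x))) - ∑ n, R (s n)| ≤ N * ε := by
    have h := hpC.2 A hAG
    simp only [LinearEquiv.apply_symm_apply] at h
    have h2 := mul_le_mul_of_nonneg_left h (le_of_lt hN')
    have hx : (N : ℝ) * (1 / N) = 1 := by field_simp
    rw [← mul_assoc, hx, one_mul] at h2
    exact h2
  -- minimality
  have hmin := hsmin _ hqΩ
  -- key bound
  have hkey : (∑ n, F n (fun x => s n (A n x))) - ∑ n, F n (rstar n) ≤ 2 * N * ε := by
    have a1 := le_abs_self ((∑ n, R (fun x => s n (A n x))) - ∑ n, R (s n))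
    have a2 := neg_abs_le ((∑ n, R (rstar n)) - ∑ n, R (fun x => rstar n ((A n).symm x)))
    linarith [hsum1, hsum2, hmin, hb1, hb2, a1, a2]
  -- quadratic growth
  have hQ := hQG _ hpΩ
  rw [Finset.sum_sub_distrib] at hQ
  -- change of variables in the final integral
  have hint : ∀ n, (∫ x, (s n x - rstar n ((A n).symm x)) ^ 2)
      = ∫ x, (s n (A n x) - rstar n x) ^ 2 := by
    intro n
    have hds := det_symm_abs (A n) (hdet n)
    have hg : Continuous (fun y : E2 => (s n (A n y) - rstar n y) ^ 2) :=
      (((hssm n).1.continuous.comp (econt (A n))).sub (hrsm n).1.continuous).pow 2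
    calc (∫ x, (s n x - rstar n ((A n).symm x)) ^ 2)
        = ∫ x, (fun y : E2 => (s n (A n y) - rstar n y) ^ 2) ((A n).symm x) := by
          congr 1; funext x; simp
      _ = ∫ x, (s n (A n x) - rstar n x) ^ 2 := cov (A n).symm hds _ hg
  have hS : ∑ n, (∫ x, (s n x - rstar n ((A n).symm x)) ^ 2)
      = ∑ n, (∫ x, (s n (A n x) - rstar n x) ^ 2) :=
    Finset.sum_congr rfl fun n _ => hint n
  rw [hS]
  have hfin : μ * ∑ n, (∫ x, (s n (A n x) - rstar n x) ^ 2) ≤ 2 * N * ε :=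
    le_trans hQ hkey
  rw [show (1 / (N : ℝ)) * ∑ n, (∫ x, (s n (A n x) - rstar n x) ^ 2)
      = (∑ n, (∫ x, (s n (A n x) - rstar n x) ^ 2)) / N by ring,
    div_le_div_iff₀ hN' hμ]
  nlinarith [hfin]
end

section
/- Let V be a real inner product space (e.g. ℝ^{m×m} with the Frobenius norm), let G be a finite group acting on V by linear isometries π_A, and let Ψ : V → V be any map. Given training pairs (X_n, Ŷ_n) ∈ V × V for n = 1, …, N, define the empirical risk L(Ψ) = (1/N) Σ_{n=1}^N ‖X_n − Ψ(Ŷ_n)‖² and the averaged operator Ψ̄(v) = (1/|G|) Σ_{A ∈ G} π_A( Ψ( π_A⁻¹(v) ) ). Then L(Ψ̄) ≤ 2·L(Ψ) + (2/N) Σ_{n=1}^N (1/|G|) Σ_{A ∈ G} ‖ Ψ(Ŷ_n) − π_A( Ψ( π_A⁻¹(Ŷ_n) ) ) ‖². -/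
open Finset

theorem norm_sub_sq_le_two_mul_add {E : Type*} [SeminormedAddCommGroup E] (a b c : E) :
    ‖a - b‖ ^ 2 ≤ 2 * ‖a - c‖ ^ 2 + 2 * ‖c - b‖ ^ 2 := by
  calc ‖a - b‖ ^ 2 ≤ (‖a - c‖ + ‖c - b‖) ^ 2 := by
        gcongr; exact norm_sub_le_norm_sub_add_norm_sub a c b
    _ ≤ 2 * ‖a - c‖ ^ 2 + 2 * ‖c - b‖ ^ 2 := by nlinarith [sq_nonneg (‖a - c‖ - ‖c - b‖)]

theorem norm_inv_card_smul_sum_sq_le {ι E : Type*} [SeminormedAddCommGroup E] [NormedSpace ℝ E]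
    (s : Finset ι) (f : ι → E) :
    ‖(#s : ℝ)⁻¹ • ∑ i ∈ s, f i‖ ^ 2 ≤ (#s : ℝ)⁻¹ * ∑ i ∈ s, ‖f i‖ ^ 2 := by
  rcases s.eq_empty_or_nonempty with rfl | hs
  · simp
  have hk : (#s : ℝ) ≠ 0 := by exact_mod_cast hs.card_ne_zero
  calc ‖(#s : ℝ)⁻¹ • ∑ i ∈ s, f i‖ ^ 2 ≤ ((#s : ℝ)⁻¹ * ∑ i ∈ s, ‖f i‖) ^ 2 := by
        rw [norm_smul, norm_inv, Real.norm_natCast]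
        gcongr
        exact norm_sum_le s f
    _ = (#s : ℝ)⁻¹ * ((#s : ℝ)⁻¹ * (∑ i ∈ s, ‖f i‖) ^ 2) := by ring
    _ ≤ (#s : ℝ)⁻¹ * ((#s : ℝ)⁻¹ * (#s * ∑ i ∈ s, ‖f i‖ ^ 2)) := by
        gcongr; exact sq_sum_le_card_mul_sum_sq
    _ = (#s : ℝ)⁻¹ * ∑ i ∈ s, ‖f i‖ ^ 2 := by rw [inv_mul_cancel_left₀ hk]

theorem sub_inv_card_smul_sum {ι E : Type*} [AddCommGroup E] [Module ℝ E]
    {s : Finset ι} (hs : s.Nonempty) (c : E) (g : ι → E) :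
    c - (#s : ℝ)⁻¹ • ∑ i ∈ s, g i = (#s : ℝ)⁻¹ • ∑ i ∈ s, (c - g i) := by
  have hk : (#s : ℝ) ≠ 0 := by exact_mod_cast hs.card_ne_zero
  rw [sum_sub_distrib, smul_sub, sum_const, ← Nat.cast_smul_eq_nsmul ℝ, inv_smul_smul₀ hk]

theorem norm_sub_average_sq_le {ι E : Type*} [Fintype ι] [Nonempty ι]
    [SeminormedAddCommGroup E] [NormedSpace ℝ E] (x c : E) (g : ι → E) :
    ‖x - (Fintype.card ι : ℝ)⁻¹ • ∑ i, g i‖ ^ 2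
      ≤ 2 * ‖x - c‖ ^ 2 + 2 * ((Fintype.card ι : ℝ)⁻¹ * ∑ i, ‖c - g i‖ ^ 2) := by
  have hdefect := norm_inv_card_smul_sum_sq_le univ fun i ↦ c - g i
  rw [← sub_inv_card_smul_sum univ_nonempty, card_univ] at hdefect
  linarith [norm_sub_sq_le_two_mul_add x ((Fintype.card ι : ℝ)⁻¹ • ∑ i, g i) c]

theorem stmt_12_general {G : Type*} [Group G] [Fintype G]
    {V : Type*} [NormedAddCommGroup V] [InnerProductSpace ℝ V]
    (π : G →* (V ≃ₗᵢ[ℝ] V)) (Ψ : V → V)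
    (N : ℕ) (X Yhat : Fin N → V)
    (Ψbar : V → V)
    (hΨbar : ∀ v, Ψbar v = (Fintype.card G : ℝ)⁻¹ • ∑ A : G, π A (Ψ ((π A).symm v))) :
    (1 / (N : ℝ)) * ∑ n, ‖X n - Ψbar (Yhat n)‖ ^ 2
      ≤ 2 * ((1 / (N : ℝ)) * ∑ n, ‖X n - Ψ (Yhat n)‖ ^ 2)
        + (2 / (N : ℝ)) * ∑ n, (Fintype.card G : ℝ)⁻¹ *
            ∑ A : G, ‖Ψ (Yhat n) - π A (Ψ ((π A).symm (Yhat n)))‖ ^ 2 := by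
  calc (1 / (N : ℝ)) * ∑ n, ‖X n - Ψbar (Yhat n)‖ ^ 2
      ≤ (1 / (N : ℝ)) * ∑ n, (2 * ‖X n - Ψ (Yhat n)‖ ^ 2 + 2 * ((Fintype.card G : ℝ)⁻¹ *
          ∑ A : G, ‖Ψ (Yhat n) - π A (Ψ ((π A).symm (Yhat n)))‖ ^ 2)) := by
        gcongr with n
        rw [hΨbar]
        exact norm_sub_average_sq_le _ _ _
    _ = _ := by rw [sum_add_distrib, ← mul_sum, ← mul_sum]; ring

/-- **central estimate in the proof of Theorem 4.2.**
Let `V` be a real inner product space, `G` a finite group acting on `V` by linear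
isometries `π_A`, and `Ψ : V → V` any map.  For training pairs `(X_n, Ŷ_n)`, the
empirical risk of the Reynolds-averaged operator
`Ψ̄(v) = (1/|G|) Σ_{A} π_A(Ψ(π_A⁻¹(v)))` satisfies
`L(Ψ̄) ≤ 2 L(Ψ) + (2/N) Σ_n (1/|G|) Σ_A ‖Ψ(Ŷ_n) − π_A(Ψ(π_A⁻¹(Ŷ_n)))‖²`. -/
theorem stmt_12 {G : Type*} [Group G] [Fintype G]
    {V : Type*} [NormedAddCommGroup V] [InnerProductSpace ℝ V]
    (π : G →* (V ≃ₗᵢ[ℝ] V)) (Ψ : V → V)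
    (N : ℕ) (hN : 0 < N) (X Yhat : Fin N → V)
    (Ψbar : V → V)
    (hΨbar : ∀ v, Ψbar v = (Fintype.card G : ℝ)⁻¹ • ∑ A : G, π A (Ψ ((π A).symm v))) :
    (1 / (N : ℝ)) * ∑ n, ‖X n - Ψbar (Yhat n)‖ ^ 2
      ≤ 2 * ((1 / (N : ℝ)) * ∑ n, ‖X n - Ψ (Yhat n)‖ ^ 2)
        + (2 / (N : ℝ)) * ∑ n, (Fintype.card G : ℝ)⁻¹ *
            ∑ A : G, ‖Ψ (Yhat n) - π A (Ψ ((π A).symm (Yhat n)))‖ ^ 2 :=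
  stmt_12_general π Ψ N X Yhat Ψbar hΨbar
end

section
/- Let V be a real inner product space (e.g. ℝ^{m×m} with the Frobenius norm), let G be a finite group acting on V by linear isometries π_A, and let (X_n, Ŷ_n) ∈ V × V, n = 1, …, N, be training pairs with empirical risk L(Ψ) = (1/N) Σ_{n=1}^N ‖X_n − Ψ(Ŷ_n)‖². Let Λ be a set of maps V → V and Λ_EQ = { Ψ ∈ Λ : Ψ(π_A(v)) = π_A(Ψ(v)) for all A ∈ G and all v ∈ V } its equivariant subset. Suppose: (i) Ψ* ∈ Λ minimizes L over Λ and Ψ*_EQ ∈ Λ_EQ minimizes L over Λ_EQ; (ii) the Reynolds average Ψ̄*(v) = (1/|G|) Σ_{A ∈ G} π_A( Ψ*( π_A⁻¹(v) ) ) belongs to Λ_EQ; (iii) there exist constants C, Ĉ ≥ 0, a mesh size h > 0, and a symmetry error ε ≥ 0 such that for every n and every A ∈ G, ‖ Ψ*( π_A(Ỹ) ) − π_A( Ψ*(Ỹ) ) ‖² ≤ C·h² + Ĉ·ε, where Ỹ = π_A⁻¹(Ŷ_n). Then the empirical risk of the equivariant minimizer satisfies L(Ψ*_EQ) ≤ 2·L(Ψ*)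 + 2C·h² + 2Ĉ·ε. -/
/-!
Since the Reynolds average `Ψ̄` of `Ψ*` lies in `Λ_EQ`, it suffices to bound `L(Ψ̄)`.
Each summand `π_A Ψ*(π_A⁻¹ Ŷ)` of `Ψ̄(Ŷ)` differs from `Ψ*(Ŷ)` by the equivariance defect of
`Ψ*` at `π_A⁻¹ Ŷ`, so `‖X - π_A Ψ*(π_A⁻¹ Ŷ)‖² ≤ 2‖X - Ψ*(Ŷ)‖² + 2(C h² + Ĉ ε)`. Balls are convex,
so the average over `G` obeys the same bound, and averaging over the training pairs gives the
claim.
-/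

open Finset

theorem norm_add_sq_le_two_mul {E : Type*} [SeminormedAddGroup E] (a b : E) :
    ‖a + b‖ ^ 2 ≤ 2 * ‖a‖ ^ 2 + 2 * ‖b‖ ^ 2 :=
  calc ‖a + b‖ ^ 2 ≤ (‖a‖ + ‖b‖) ^ 2 := by gcongr; exact norm_add_le a b
    _ ≤ 2 * ‖a‖ ^ 2 + 2 * ‖b‖ ^ 2 := by linarith [add_sq_le (a := ‖a‖) (b := ‖b‖)]

theorem norm_sub_average_sq_le_s13 {ι E : Type*} [SeminormedAddCommGroup E] [NormedSpace ℝ E]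
    {s : Finset ι} (hs : s.Nonempty) {f : ι → E} {x : E} {B : ℝ}
    (h : ∀ i ∈ s, ‖x - f i‖ ^ 2 ≤ B) :
    ‖x - (#s : ℝ)⁻¹ • ∑ i ∈ s, f i‖ ^ 2 ≤ B := by
  obtain ⟨i₀, hi₀⟩ := hs
  have hB : 0 ≤ B := (sq_nonneg _).trans (h i₀ hi₀)
  have hball : ∀ i ∈ s, f i ∈ Metric.closedBall x √B := fun i hi => by
    rw [mem_closedBall_iff_norm', Real.le_sqrt (norm_nonneg _) hB]
    exact h i hi
  have hmem : ∑ i ∈ s, (#s : ℝ)⁻¹ • f i ∈ Metric.closedBall x √B :=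
    (convex_closedBall x √B).sum_mem (fun _ _ => by positivity)
      (by simp [card_ne_zero_of_mem hi₀]) hball
  rw [← smul_sum, mem_closedBall_iff_norm', Real.le_sqrt (norm_nonneg _) hB] at hmem
  exact hmem

section Reynolds

variable {G V : Type*} [Monoid G] [Fintype G] [NormedAddCommGroup V] [NormedSpace ℝ V]

noncomputable def reynolds (π : G →* (V ≃ₗᵢ[ℝ] V)) (Ψ : V → V) : V → V :=
  fun v => (Fintype.card G : ℝ)⁻¹ • ∑ A : G, π A (Ψ ((π A).symm v))

theorem norm_sub_reynolds_sq_le (π : G →* (V ≃ₗᵢ[ℝ] V)) (Ψ : V → V) (x y : V) {K : ℝ}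
    (hK : ∀ A : G, ‖Ψ (π A ((π A).symm y)) - π A (Ψ ((π A).symm y))‖ ^ 2 ≤ K) :
    ‖x - reynolds π Ψ y‖ ^ 2 ≤ 2 * ‖x - Ψ y‖ ^ 2 + 2 * K := by
  have hterm : ∀ A ∈ (univ : Finset G),
      ‖x - π A (Ψ ((π A).symm y))‖ ^ 2 ≤ 2 * ‖x - Ψ y‖ ^ 2 + 2 * K := fun A _ => by
    have hsplit : x - π A (Ψ ((π A).symm y))
        = (x - Ψ y) + (Ψ (π A ((π A).symm y)) - π A (Ψ ((π A).symm y))) := by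
      rw [LinearIsometryEquiv.apply_symm_apply]; abel
    rw [hsplit]
    linarith [norm_add_sq_le_two_mul (x - Ψ y)
      (Ψ (π A ((π A).symm y)) - π A (Ψ ((π A).symm y))), hK A]
  simpa only [reynolds, card_univ] using norm_sub_average_sq_le_s13 univ_nonempty hterm

end Reynolds

noncomputable def empiricalRisk {V : Type*} [NormedAddCommGroup V] {N : ℕ} (X Y : Fin N → V)
    (Ψ : V → V) : ℝ :=
  (1 / (N : ℝ)) * ∑ n, ‖X n - Ψ (Y n)‖ ^ 2

theorem empiricalRisk_le_of_forall_le {V : Type*} [NormedAddCommGroup V] {N : ℕ} (hN : 0 < N)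
    {X Y : Fin N → V} {Φ Ψ : V → V} {a c : ℝ}
    (h : ∀ n, ‖X n - Φ (Y n)‖ ^ 2 ≤ a * ‖X n - Ψ (Y n)‖ ^ 2 + c) :
    empiricalRisk X Y Φ ≤ a * empiricalRisk X Y Ψ + c := by
  have hN' : (0 : ℝ) < N := by exact_mod_cast hN
  calc empiricalRisk X Y Φ ≤ (1 / (N : ℝ)) * ∑ n, (a * ‖X n - Ψ (Y n)‖ ^ 2 + c) := by
        unfold empiricalRisk; gcongr with n; exact h n
    _ = a * empiricalRisk X Y Ψ + c := by
        rw [sum_add_distrib, ← mul_sum, sum_const, card_univ, Fintype.card_fin, nsmul_eq_mul,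
          empiricalRisk]
        field_simp

theorem stmt_13_general {G : Type*} [Group G] [Fintype G]
    {V : Type*} [NormedAddCommGroup V] [InnerProductSpace ℝ V]
    (π : G →* (V ≃ₗᵢ[ℝ] V))
    (N : ℕ) (hN : 0 < N) (X Yhat : Fin N → V)
    (L : (V → V) → ℝ)
    (hL : ∀ Ψ : V → V, L Ψ = (1 / (N : ℝ)) * ∑ n, ‖X n - Ψ (Yhat n)‖ ^ 2)
    (ΛEQ : Set (V → V))
    (Ψstar ΨstarEQ : V → V)
    (hΨstarEQmin : ∀ Ψ ∈ ΛEQ, L ΨstarEQ ≤ L Ψ)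
    (hreynolds :
      (fun v => (Fintype.card G : ℝ)⁻¹ • ∑ A : G, π A (Ψstar ((π A).symm v))) ∈ ΛEQ)
    (C Chat h ε : ℝ)
    (hbound : ∀ (n : Fin N) (A : G),
      ‖Ψstar (π A ((π A).symm (Yhat n))) - π A (Ψstar ((π A).symm (Yhat n)))‖ ^ 2
        ≤ C * h ^ 2 + Chat * ε) :
    L ΨstarEQ ≤ 2 * L Ψstar + 2 * C * h ^ 2 + 2 * Chat * ε := by
  have hrisk : empiricalRisk X Yhat (reynolds π Ψstar)
      ≤ 2 * empiricalRisk X Yhat Ψstar + 2 * (C * h ^ 2 + Chat * ε) :=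
    empiricalRisk_le_of_forall_le hN fun n =>
      norm_sub_reynolds_sq_le π Ψstar (X n) (Yhat n) (hbound n)
  calc L ΨstarEQ ≤ L (reynolds π Ψstar) := hΨstarEQmin _ hreynolds
    _ = empiricalRisk X Yhat (reynolds π Ψstar) := hL _
    _ ≤ 2 * empiricalRisk X Yhat Ψstar + 2 * (C * h ^ 2 + Chat * ε) := hrisk
    _ = 2 * L Ψstar + 2 * C * h ^ 2 + 2 * Chat * ε := by rw [hL, empiricalRisk]; ring

/-- **Theorem 4.2, Empirical Risk of Equivariant Network.**
Let `V` be a real inner product space, `G` a finite group acting on `V` by linear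
isometries `π_A`, `(X_n, Ŷ_n)` training pairs with empirical risk
`L(Ψ) = (1/N) Σ ‖X_n − Ψ(Ŷ_n)‖²`, `Λ` a set of maps and `Λ_EQ` its equivariant
subset.  If `Ψ*` minimizes `L` over `Λ`, `Ψ*_EQ` minimizes `L` over `Λ_EQ`, the
Reynolds average of `Ψ*` lies in `Λ_EQ`, and the equivariance error of `Ψ*` is
bounded by `C·h² + Ĉ·ε`, then `L(Ψ*_EQ) ≤ 2·L(Ψ*) + 2C·h² + 2Ĉ·ε`. -/
theorem stmt_13 {G : Type*} [Group G] [Fintype G]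
    {V : Type*} [NormedAddCommGroup V] [InnerProductSpace ℝ V]
    (π : G →* (V ≃ₗᵢ[ℝ] V))
    (N : ℕ) (hN : 0 < N) (X Yhat : Fin N → V)
    (L : (V → V) → ℝ)
    (hL : ∀ Ψ : V → V, L Ψ = (1 / (N : ℝ)) * ∑ n, ‖X n - Ψ (Yhat n)‖ ^ 2)
    (Λ : Set (V → V))
    (ΛEQ : Set (V → V))
    (hΛEQ : ΛEQ = {Ψ ∈ Λ | ∀ (A : G) (v : V), Ψ (π A v) = π A (Ψ v)})
    (Ψstar ΨstarEQ : V → V)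
    (hΨstar : Ψstar ∈ Λ) (hΨstarmin : ∀ Ψ ∈ Λ, L Ψstar ≤ L Ψ)
    (hΨstarEQ : ΨstarEQ ∈ ΛEQ) (hΨstarEQmin : ∀ Ψ ∈ ΛEQ, L ΨstarEQ ≤ L Ψ)
    (hreynolds :
      (fun v => (Fintype.card G : ℝ)⁻¹ • ∑ A : G, π A (Ψstar ((π A).symm v))) ∈ ΛEQ)
    (C Chat h ε : ℝ) (hC : 0 ≤ C) (hChat : 0 ≤ Chat) (hh : 0 < h) (hε : 0 ≤ ε)
    (hbound : ∀ (n : Fin N) (A : G),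
      ‖Ψstar (π A ((π A).symm (Yhat n))) - π A (Ψstar ((π A).symm (Yhat n)))‖ ^ 2
        ≤ C * h ^ 2 + Chat * ε) :
    L ΨstarEQ ≤ 2 * L Ψstar + 2 * C * h ^ 2 + 2 * Chat * ε :=
  stmt_13_general π N hN X Yhat L hL ΛEQ Ψstar ΨstarEQ hΨstarEQmin hreynolds C Chat h ε hbound
end
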